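/- Let R be a commutative ring, ≺ a monomial ordering on the standard monomial basis B of R⟨X₁,…,Xₙ⟩, and I an ideal of R⟨X₁,…,Xₙ⟩. Suppose I contains a monic subset G = {g_{ji} : 1 ≤ i < j ≤ n} of n(n−1)/2 elements with LM(g_{ji}) = X_j X_i for all 1 ≤ i < j ≤ n. Then the following are equivalent: (1) the canonical images of the ordered monomials X₁^{α₁} X₂^{α₂} ⋯ Xₙ^{αₙ} (α₁,…,αₙ ∈ ℕ) in A = R⟨X₁,…,Xₙ⟩/I form a free R-basis of A (a PBW R-basis); (2) every monic subset 𝒢 of I with G ⊆ 𝒢 is a monic Gröbner basis of I with respect to ≺. -/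

import Mathlib

noncomputable section
open MonoidAlgebra
open scoped Classical

/-- Words in the alphabet `X_1, ..., X_n`: the standard monomial basis `B`. -/
abbrev Word (n : ℕ) : Type := FreeMonoid (Fin n)

/-- The free `R`-algebra `R⟨X_1, ..., X_n⟩`, realized as the monoid algebra of the
free monoid on `n` letters over `R`. -/
abbrev FreeAlg (R : Type) [CommRing R] (n : ℕ) : Type := MonoidAlgebra R (Word n)

variable {R : Type} [CommRing R] {n : ℕ}

/-- The monomial (word) `w` viewed as an element of the free algebra. -/
def mono (R : Type) [CommRing R] {n : ℕ} (w : Word n) : FreeAlg R n :=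
  MonoidAlgebra.of R (Word n) w

/-- A monomial ordering: a well-ordering on words compatible with two-sided multiplication. -/
def IsMonomialOrder (n : ℕ) [LinearOrder (Word n)] : Prop :=
  WellFoundedLT (Word n) ∧ ∀ w u v s : Word n, u < v → w * u * s < w * v * s

/-- The leading monomial of `f` (with junk value `1` for `f = 0`). -/
def LMon [LinearOrder (Word n)] (f : FreeAlg R n) : Word n :=
  if h : f = 0 then 1 else f.coeff.support.max'
    (Finsupp.support_nonempty_iff.mpr (mt MonoidAlgebra.coeff_eq_zero.mp h))

/-- The leading coefficient of `f`. -/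
def LCoef [LinearOrder (Word n)] (f : FreeAlg R n) : R := f.coeff (LMon f)

/-- `f` is monic: it is nonzero and its leading coefficient is `1`. -/
def IsMonic [LinearOrder (Word n)] (f : FreeAlg R n) : Prop := f ≠ 0 ∧ LCoef f = 1

/-- `v` divides `u` as words: `u = w * v * s` for some words `w, s`. -/
def MDvd {n : ℕ} (v u : Word n) : Prop := ∃ w s : Word n, u = w * v * s

/-- `G` is a monic Gröbner basis of the two-sided ideal `I`: every element of `G` is monic,
and the leading monomial of every nonzero element of `I` is divisible by the leading
monomial of some element of `G`. -/
def IsMonicGB [LinearOrder (Word n)] (G : Set (FreeAlg R n))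
    (I : TwoSidedIdeal (FreeAlg R n)) : Prop :=
  (∀ g ∈ G, IsMonic g) ∧ ∀ f ∈ I, f ≠ 0 → ∃ g ∈ G, MDvd (LMon g) (LMon f)

/-- The underlying `R`-submodule of a two-sided ideal of the free algebra. -/
def idealSubmodule (I : TwoSidedIdeal (FreeAlg R n)) : Submodule R (FreeAlg R n) :=
  Submodule.restrictScalars R (TwoSidedIdeal.asIdeal I)

/-- The canonical images of the words in `S` form a free `R`-basis of the quotient of the
free algebra by the two-sided ideal `I` (equivalently, they are `R`-linearly independent
and span the quotient). -/
def ImageFreeBasis (I : TwoSidedIdeal (FreeAlg R n)) (S : Set (Word n)) : Prop :=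
  LinearIndependent R (fun u : S => (idealSubmodule I).mkQ (mono R (u : Word n))) ∧
  Submodule.span R
    (Set.range fun u : S => (idealSubmodule I).mkQ (mono R (u : Word n))) = ⊤

/-- The ordered monomial `X_1^(α 1) * X_2^(α 2) * ... * X_n^(α n)` as a word. -/
def ordWord {n : ℕ} (α : Fin n → ℕ) : Word n :=
  (List.ofFn fun i => FreeMonoid.of i ^ α i).prod

/-- The images of the ordered monomials `X_1^(α 1) ⋯ X_n^(α n)` form a free `R`-basis
(a PBW `R`-basis) of `R⟨X⟩/I`. -/
def HasPBWBasis (I : TwoSidedIdeal (FreeAlg R n)) : Prop :=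
  LinearIndependent R
    (fun α : Fin n → ℕ => (idealSubmodule I).mkQ (mono R (ordWord α))) ∧
  Submodule.span R
    (Set.range fun α : Fin n → ℕ => (idealSubmodule I).mkQ (mono R (ordWord α))) = ⊤

/-!
A word is an ordered monomial iff it has no factor `X_j X_i` with `i < j`, i.e. iff it is not
divisible by any `LM(g j i)`. Rewriting such a factor by the lower terms of `g j i` reduces every
word, modulo `I`, to ordered monomials not above it; so the span `S` of the ordered monomials
always satisfies `S + I = R⟨X⟩`, and the PBW property says exactly that `S ∩ I = 0`. Reducing
the lower terms in turn shows that `S ∩ I = 0` iff no nonzero element of `I` has an ordered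
leading monomial, which is the Gröbner basis property for every `𝒢 ⊇ G`.
-/

namespace MonoidAlgebra

variable {k G : Type*}

theorem mem_of_forall_of_mem [Semiring k] [MulOneClass G] {P : Submodule k (MonoidAlgebra k G)}
    {f : MonoidAlgebra k G} (h : ∀ g ∈ f.coeff.support, of k G g ∈ P) : f ∈ P :=
  Submodule.span_le.2 (by rintro _ ⟨g, hg, rfl⟩; exact h g hg) (mem_span_support_coeff f)

theorem support_coeff_of_mul_mul_of_subset [Semiring k] [Monoid G] [DecidableEq G]
    (a b : G) (f : MonoidAlgebra k G) :
    (of k G a * f * of k G b).coeff.support ⊆ f.coeff.support.image (a * · * b) := by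
  intro w hw
  obtain ⟨v, hv, rfl⟩ := Finset.mem_image.1 (support_coeff_mul_single_subset _ _ _ hw)
  obtain ⟨u, hu, rfl⟩ := Finset.mem_image.1 (support_coeff_single_mul_subset _ _ _ hv)
  exact Finset.mem_image_of_mem _ hu

theorem isCompl_supported_range_iff [Ring k] [Monoid G] (p : Submodule k (MonoidAlgebra k G))
    {ι : Type*} {e : ι → G} (he : Function.Injective e) :
    IsCompl (supported k k (Set.range e)) p ↔
      LinearIndependent k (fun i => p.mkQ (of k G (e i))) ∧
        Submodule.span k (Set.range fun i => p.mkQ (of k G (e i))) = ⊤ := by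
  have hli : LinearIndependent k (fun i => of k G (e i)) :=
    (basis G k).linearIndependent.comp e he
  have hspan :
      Submodule.span k (Set.range fun i => of k G (e i)) = supported k k (Set.range e) := by
    rw [supported_eq_span_single, ← Set.range_comp]
    rfl
  have hmap : Submodule.span k (Set.range fun i => p.mkQ (of k G (e i))) =
      (supported k k (Set.range e)).map p.mkQ := by
    rw [← hspan, Submodule.map_span, ← Set.range_comp]
    rfl
  rw [isCompl_iff, codisjoint_iff, hmap, Submodule.map_mkQ_eq_top, sup_comm]
  refine and_congr ⟨fun h => ?_, fun h => ?_⟩ Iff.rfl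
  · exact hli.map (f := p.mkQ) (by rwa [hspan, Submodule.ker_mkQ])
  · have := Submodule.range_ker_disjoint (f := p.mkQ) h
    rwa [Submodule.ker_mkQ, hspan] at this

end MonoidAlgebra

theorem FreeMonoid.toList_of_pow {α : Type*} (a : α) (k : ℕ) :
    toList (of a ^ k) = List.replicate k a := by
  induction k with
  | zero => rfl
  | succ k ih => rw [pow_succ, toList_mul, ih, toList_of, List.replicate_succ']

open FreeMonoid

section Words

theorem toList_ordWord (α : Fin n → ℕ) :
    toList (ordWord α) = (List.ofFn fun i => List.replicate (α i) i).flatten := by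
  simp [ordWord, toList_prod, List.map_ofFn, Function.comp_def, toList_of_pow]

theorem pairwise_toList_ordWord (α : Fin n → ℕ) :
    (toList (ordWord α)).Pairwise (· ≤ ·) := by
  rw [toList_ordWord, List.pairwise_flatten, List.pairwise_ofFn]
  refine ⟨?_, fun i j hij x hx y hy => ?_⟩
  · simp only [List.mem_ofFn, forall_exists_index]
    rintro _ i rfl
    exact List.pairwise_replicate.2 (Or.inr le_rfl)
  · rw [List.eq_of_mem_replicate hx, List.eq_of_mem_replicate hy]
    exact hij.le

theorem count_toList_ordWord (α : Fin n → ℕ) (i : Fin n) :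
    (toList (ordWord α)).count i = α i := by
  simp [toList_ordWord, List.count_flatten, List.map_ofFn, List.sum_ofFn, Function.comp_def,
    List.count_replicate]

theorem ordWord_injective : Function.Injective (ordWord (n := n)) := fun α β h =>
  funext fun i => by rw [← count_toList_ordWord α i, ← count_toList_ordWord β i, h]

theorem mem_range_ordWord_iff {w : Word n} :
    w ∈ Set.range ordWord ↔ (toList w).Pairwise (· ≤ ·) := by
  refine ⟨?_, fun hw => ⟨fun i => (toList w).count i, toList.injective ?_⟩⟩
  · rintro ⟨α, rfl⟩
    exact pairwise_toList_ordWord α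
  · exact List.Perm.eq_of_pairwise' (pairwise_toList_ordWord _) hw
      (List.perm_iff_count.2 (count_toList_ordWord _))

theorem notMem_range_ordWord_iff {w : Word n} :
    w ∉ Set.range ordWord ↔ ∃ i j : Fin n, i < j ∧ MDvd (of j * of i) w := by
  rw [mem_range_ordWord_iff, ← List.isChain_iff_pairwise,
    List.isChain_iff_forall_rel_of_append_cons_cons]
  push Not
  constructor
  · rintro ⟨j, i, a, b, hw, hij⟩
    exact ⟨i, j, hij, ofList a, ofList b, toList.injective (by simp [hw])⟩
  · rintro ⟨i, j, hij, a, b, rfl⟩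
    exact ⟨j, i, toList a, toList b, by simp, hij⟩

end Words

theorem mem_idealSubmodule {I : TwoSidedIdeal (FreeAlg R n)} {f : FreeAlg R n} :
    f ∈ idealSubmodule I ↔ f ∈ I :=
  TwoSidedIdeal.mem_asIdeal

theorem hasPBWBasis_iff_isCompl (I : TwoSidedIdeal (FreeAlg R n)) :
    HasPBWBasis I ↔ IsCompl (supported R R (Set.range ordWord)) (idealSubmodule I) :=
  (isCompl_supported_range_iff _ ordWord_injective).symm

section LeadingMonomial

variable [LinearOrder (Word n)]

theorem LMon_mem_support {f : FreeAlg R n} (hf : f ≠ 0) : LMon f ∈ f.coeff.support := by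
  rw [LMon, dif_neg hf]
  exact Finset.max'_mem _ _

theorem le_LMon {f : FreeAlg R n} (hf : f ≠ 0) {w : Word n} (hw : w ∈ f.coeff.support) :
    w ≤ LMon f := by
  rw [LMon, dif_neg hf]
  exact Finset.le_max' _ _ hw

theorem support_sub_leading_subset {f : FreeAlg R n} (hf : f ≠ 0) :
    ↑(f - LCoef f • mono R (LMon f)).coeff.support ⊆ Set.Iio (LMon f) := by
  intro w hw
  have hne : w ≠ LMon f := by
    rintro rfl
    simp [LCoef, mono] at hw
  refine lt_of_le_of_ne (le_LMon hf ?_) hne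
  simpa [mono, Finsupp.single_apply, hne.symm] using hw

theorem IsMonic.support_sub_leading_subset {g : FreeAlg R n} (hg : IsMonic g) :
    ↑(g - mono R (LMon g)).coeff.support ⊆ Set.Iio (LMon g) := by
  simpa [hg.2] using _root_.support_sub_leading_subset hg.1

end LeadingMonomial

def orderedSpan (I : TwoSidedIdeal (FreeAlg R n)) (s : Set (Word n)) : Submodule R (FreeAlg R n) :=
  supported R R (Set.range ordWord ∩ s) ⊔ idealSubmodule I

section Reduction

variable {I : TwoSidedIdeal (FreeAlg R n)}

theorem orderedSpan_mono {s t : Set (Word n)} (hst : s ⊆ t) :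
    orderedSpan I s ≤ orderedSpan I t :=
  sup_le_sup_right (supported_mono (Set.inter_subset_inter_right _ hst)) _

variable [LinearOrder (Word n)]

theorem mem_orderedSpan_of_support_subset {s : Set (Word n)} (hs : IsLowerSet s)
    (hmono : ∀ v ∈ s, mono R v ∈ orderedSpan I (Set.Iic v)) {f : FreeAlg R n}
    (hf : ↑f.coeff.support ⊆ s) : f ∈ orderedSpan I s :=
  mem_of_forall_of_mem fun v hv => orderedSpan_mono (hs.Iic_subset (hf hv)) (hmono v (hf hv))

variable (hord : IsMonomialOrder n) {g : Fin n → Fin n → FreeAlg R n}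
  (hmem : ∀ i j : Fin n, i < j → g j i ∈ I)
  (hmonic : ∀ i j : Fin n, i < j → IsMonic (g j i))
  (hlm : ∀ i j : Fin n, i < j → LMon (g j i) = FreeMonoid.of j * FreeMonoid.of i)
include hord hmem hmonic hlm

/-- Rewriting a descent `X_j X_i` by `X_j X_i - g j i` strictly lowers the monomial. -/
theorem mono_mem_orderedSpan_Iic (v : Word n) : mono R v ∈ orderedSpan I (Set.Iic v) := by
  induction v using WellFounded.induction (r := (· < ·)) hord.1.wf with
  | _ v ih =>
  by_cases hv : v ∈ Set.range ordWord
  · refine Submodule.mem_sup_left (mem_supported.2 fun w hw => ?_)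
    rw [Finset.mem_singleton.1 (Finsupp.support_single_subset hw)]
    exact ⟨hv, le_refl v⟩
  obtain ⟨i, j, hij, a, b, rfl⟩ := notMem_range_ordWord_iff.1 hv
  set t := g j i - mono R (of j * of i)
  have hsplit : mono R (a * (of j * of i) * b) =
      mono R a * g j i * mono R b - mono R a * t * mono R b := by
    simp only [t, mul_sub, sub_mul, sub_sub_cancel, mono, ← map_mul]
  have hlower : ↑(mono R a * t * mono R b).coeff.support ⊆ Set.Iio (a * (of j * of i) * b) := by
    intro w hw
    obtain ⟨u, hu, rfl⟩ := Finset.mem_image.1 (support_coeff_of_mul_mul_of_subset a b t hw)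
    have hu : u < of j * of i := hlm i j hij ▸ (hmonic i j hij).support_sub_leading_subset
      (by rwa [hlm i j hij])
    exact hord.2 a u _ b hu
  rw [hsplit]
  refine sub_mem (Submodule.mem_sup_right (mem_idealSubmodule.2 ?_)) ?_
  · exact I.mul_mem_right _ _ (I.mul_mem_left _ _ (hmem i j hij))
  · exact orderedSpan_mono Set.Iio_subset_Iic_self
      (mem_orderedSpan_of_support_subset (isLowerSet_Iio _) ih hlower)

theorem codisjoint_supported_range_ordWord :
    Codisjoint (supported R R (Set.range ordWord)) (idealSubmodule I) := by
  refine codisjoint_iff.2 (eq_top_iff.2 fun f _ => ?_)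
  simpa [orderedSpan] using mem_orderedSpan_of_support_subset isLowerSet_univ
    (fun v _ => mono_mem_orderedSpan_Iic hord hmem hmonic hlm v) (Set.subset_univ _)

/-- Reduce everything below the leading term to ordered monomials: what remains is a nonzero
element of `I` supported on ordered monomials. -/
theorem LMon_notMem_range_ordWord
    (hdisj : Disjoint (supported R R (Set.range ordWord)) (idealSubmodule I))
    {f : FreeAlg R n} (hf : f ∈ I) (hf0 : f ≠ 0) : LMon f ∉ Set.range ordWord := by
  intro hu
  obtain ⟨s, hs, i, hi, hsi⟩ := Submodule.mem_sup.1 <|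
    mem_orderedSpan_of_support_subset (isLowerSet_Iio (LMon f))
      (fun v _ => mono_mem_orderedSpan_Iic hord hmem hmonic hlm v)
      (support_sub_leading_subset hf0)
  have hs' : ↑s.coeff.support ⊆ Set.range ordWord ∩ Set.Iio (LMon f) := hs
  have hzero : LCoef f • mono R (LMon f) + s = 0 := by
    refine (Submodule.disjoint_def.1 hdisj) _ (add_mem ?_ ?_) ?_
    · refine Submodule.smul_mem _ _ (mem_supported.2 fun w hw => ?_)
      rwa [Finset.mem_singleton.1 (Finsupp.support_single_subset hw)]
    · exact fun w hw => (hs' hw).1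
    · have : LCoef f • mono R (LMon f) + s = f - i := by
        rw [eq_sub_iff_add_eq, add_assoc, hsi]; abel
      exact this ▸ sub_mem (mem_idealSubmodule.2 hf) hi
  have hs0 : s.coeff (LMon f) = 0 :=
    Finsupp.notMem_support_iff.1 fun h => lt_irrefl _ (hs' h).2
  have hcoeff : (LCoef f • mono R (LMon f) + s).coeff (LMon f) = LCoef f := by simp [mono, hs0]
  rw [hzero] at hcoeff
  exact Finsupp.mem_support_iff.1 (LMon_mem_support hf0) hcoeff.symm

end Reduction

theorem disjoint_supported_range_ordWord_of_isMonicGB [LinearOrder (Word n)]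
    {I : TwoSidedIdeal (FreeAlg R n)} {g : Fin n → Fin n → FreeAlg R n}
    (hlm : ∀ i j : Fin n, i < j → LMon (g j i) = FreeMonoid.of j * FreeMonoid.of i)
    (hGB : IsMonicGB {x | ∃ i j : Fin n, i < j ∧ x = g j i} I) :
    Disjoint (supported R R (Set.range ordWord)) (idealSubmodule I) := by
  refine Submodule.disjoint_def.2 fun f hfs hfI => by_contra fun hf0 => ?_
  obtain ⟨_, ⟨i, j, hij, rfl⟩, hdvd⟩ := hGB.2 f (mem_idealSubmodule.1 hfI) hf0
  exact notMem_range_ordWord_iff.2 ⟨i, j, hij, hlm i j hij ▸ hdvd⟩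
    (hfs (LMon_mem_support hf0))

/-- Suppose `I` contains monic elements `g j i` (`i < j`) with
`LM(g j i) = X_j X_i`. Then `R⟨X⟩/I` has a PBW `R`-basis iff every monic subset of `I`
containing all the `g j i` is a monic Gröbner basis of `I`. -/
theorem pbwBasis_iff_monicGB [LinearOrder (Word n)] (hord : IsMonomialOrder n)
    (I : TwoSidedIdeal (FreeAlg R n)) (g : Fin n → Fin n → FreeAlg R n)
    (hmem : ∀ i j : Fin n, i < j → g j i ∈ I)
    (hmonic : ∀ i j : Fin n, i < j → IsMonic (g j i))
    (hlm : ∀ i j : Fin n, i < j → LMon (g j i) = FreeMonoid.of j * FreeMonoid.of i) :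
    HasPBWBasis I ↔
      ∀ 𝒢 : Set (FreeAlg R n), (∀ x ∈ 𝒢, x ∈ I) → (∀ h ∈ 𝒢, IsMonic h) →
        {x | ∃ i j : Fin n, i < j ∧ x = g j i} ⊆ 𝒢 → IsMonicGB 𝒢 I := by
  rw [hasPBWBasis_iff_isCompl]
  constructor
  · intro hcompl 𝒢 _ h𝒢monic h𝒢
    refine ⟨h𝒢monic, fun f hf hf0 => ?_⟩
    obtain ⟨i, j, hij, hdvd⟩ := notMem_range_ordWord_iff.1 <|
      LMon_notMem_range_ordWord hord hmem hmonic hlm hcompl.disjoint hf hf0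
    exact ⟨g j i, h𝒢 ⟨i, j, hij, rfl⟩, (hlm i j hij).symm ▸ hdvd⟩
  · intro hGB
    have hG : IsMonicGB {x | ∃ i j : Fin n, i < j ∧ x = g j i} I :=
      hGB _ (by rintro _ ⟨i, j, hij, rfl⟩; exact hmem i j hij)
        (by rintro _ ⟨i, j, hij, rfl⟩; exact hmonic i j hij) subset_rfl
    exact ⟨disjoint_supported_range_ordWord_of_isMonicGB hlm hG,
      codisjoint_supported_range_ordWord hord hmem hmonic hlm⟩
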